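/- Let (Y, A, X) be a recollement of abelian categories. If A is well-powered then X and Y are well-powered; conversely, if X and Y are well-powered and Ext^1-groups in A form sets, then A is well-powered. -/

import Mathlib

open CategoryTheory Limits

universe v u u₁ u₂ u₃

/-- A recollement of categories: adjoint triples `(i^*, i_*, i^!)` and `(j_!, j^*, j_*)`,
with `i_*`, `j_!`, `j_*` fully faithful and the essential image of `i_*` equal to the
kernel of `j^*`. -/
structure Recollement (Y : Type u₁) (A : Type u₂) (X : Type u₃)
    [Category.{v} Y] [Category.{v} A] [Category.{v} X] where
  /-- `i_* : Y ⥤ A` -/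
  iStar : Y ⥤ A
  /-- `i^* : A ⥤ Y` -/
  iUp : A ⥤ Y
  /-- `i^! : A ⥤ Y` -/
  iShriek : A ⥤ Y
  /-- `j^* : A ⥤ X` -/
  jUp : A ⥤ X
  /-- `j_! : X ⥤ A` -/
  jLower : X ⥤ A
  /-- `j_* : X ⥤ A` -/
  jRight : X ⥤ A
  adj_i₁ : iUp ⊣ iStar
  adj_i₂ : iStar ⊣ iShriek
  adj_j₁ : jLower ⊣ jUp
  adj_j₂ : jUp ⊣ jRight
  iStar_full : iStar.Full
  iStar_faithful : iStar.Faithful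
  jLower_full : jLower.Full
  jLower_faithful : jLower.Faithful
  jRight_full : jRight.Full
  jRight_faithful : jRight.Faithful
  essImage_iff : ∀ M : A, iStar.essImage M ↔ IsZero (jUp.obj M)

variable {Y : Type u₁} {A : Type u₂} {X : Type u₃}
  [Category.{v} Y] [Category.{v} A] [Category.{v} X]

/-- The class `C = Ker i^*` of the TTF triple associated to a recollement. -/
def Recollement.C (R : Recollement Y A X) : A → Prop := fun M => IsZero (R.iUp.obj M)

/-- The class `T = Im i_*` of the TTF triple associated to a recollement. -/
def Recollement.T (R : Recollement Y A X) : A → Prop := fun M => R.iStar.essImage M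

/-- The class `F = Ker i^!` of the TTF triple associated to a recollement. -/
def Recollement.F (R : Recollement Y A X) : A → Prop := fun M => IsZero (R.iShriek.obj M)

/-- An (additive) functor between abelian categories is exact if it preserves finite
limits and finite colimits. -/
def IsExactFunctor {C D : Type*} [Category C] [Category D] (G : C ⥤ D) : Prop :=
  Nonempty (PreservesFiniteLimits G) ∧ Nonempty (PreservesFiniteColimits G)

/-!
A subobject `B ≤ M` is determined by its `C`-torsion part `c`, the image of `j_! j^* B → B`,
together with the image of `B` in `M ⧸ c`, which lies in `T`. Subobjects lying in `C` embed into
the subobjects of their image under `j^*`, and subobjects lying in `T` into those of their image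
under `i^!`: a morphism out of an object of `C` (resp. `T`) killed by `j^*` (resp. `i^!`) is zero.
So `Sub M` embeds into a set-indexed sum of sets when `X` and `Y` are well-powered. Conversely
`j_*` and `i_*` are faithful and preserve monomorphisms, hence embed subobject lattices.
-/

universe w

namespace CategoryTheory

namespace Subobject

variable {C : Type*} {D : Type*} [Category C] [Category D] [Abelian C]

theorem le_of_arrow_comp_cokernel_π_eq_zero {N : C} {t t' : Subobject N}
    (h : t.arrow ≫ cokernel.π t'.arrow = 0) : t ≤ t' :=
  le_of_comm (Abelian.monoLift t'.arrow t.arrow h) (Abelian.monoLift_comp _ _ _)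

theorem le_of_mk_map_le [HasZeroMorphisms D] (F : C ⥤ D) [F.PreservesMonomorphisms]
    [F.PreservesZeroMorphisms] {N : C} {t t' : Subobject N}
    (hF : ∀ {Q : C} (f : (t : C) ⟶ Q), F.map f = 0 → f = 0)
    (h : mk (F.map t.arrow) ≤ mk (F.map t'.arrow)) : t ≤ t' := by
  refine le_of_arrow_comp_cokernel_π_eq_zero (hF _ ?_)
  rw [F.map_comp, ← ofMkLEMk_comp h, Category.assoc, ← F.map_comp, cokernel.condition,
    F.map_zero, comp_zero]

theorem small_of_map_eq_zero [HasZeroMorphisms D] (F : C ⥤ D) [F.PreservesMonomorphisms]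
    [F.PreservesZeroMorphisms] {N : C} (S : Set (Subobject N))
    (hF : ∀ t ∈ S, ∀ {Q : C} (f : (t : C) ⟶ Q), F.map f = 0 → f = 0)
    [Small.{w} (Subobject (F.obj N))] : Small.{w} S :=
  small_of_injective (f := fun t : S => mk (F.map t.1.arrow)) fun t t' h =>
    Subtype.ext <| le_antisymm (le_of_mk_map_le F (hF t t.2) h.le)
      (le_of_mk_map_le F (hF t' t'.2) h.ge)

theorem comp_cokernel_π_imageSubobject_arrow {P Q : C} (f : P ⟶ Q) :
    f ≫ cokernel.π (imageSubobject f).arrow = 0 := by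
  conv_lhs => arg 1; rw [← imageSubobject_arrow_comp f]
  rw [Category.assoc, cokernel.condition, comp_zero]

/-- `B` is recovered from `c ≤ B` and the image of `B` in `N ⧸ c`. -/
theorem kernelSubobject_cokernel_π_comp_cokernel_π_image {N : C} {c B : Subobject N}
    (hcB : c ≤ B) :
    kernelSubobject (cokernel.π c.arrow ≫
      cokernel.π (imageSubobject (B.arrow ≫ cokernel.π c.arrow)).arrow) = B := by
  set π := cokernel.π c.arrow
  set I := imageSubobject (B.arrow ≫ π)
  set K := kernelSubobject (π ≫ cokernel.π I.arrow)
  refine le_antisymm (le_of_arrow_comp_cokernel_π_eq_zero ?_) (le_kernelSubobject _ _ ?_)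
  · have hK : (K.arrow ≫ π) ≫ cokernel.π I.arrow = 0 := by
      rw [Category.assoc]; exact kernelSubobject_arrow_comp _
    -- Lift `K → I` along the epi `B ↠ I` up to refinement; the difference lies in `c ≤ B`.
    obtain ⟨T, p, _, b, hb⟩ := surjective_up_to_refinements_of_epi
      (factorThruImageSubobject (B.arrow ≫ π)) (Abelian.monoLift I.arrow _ hK)
    have hdiff : (p ≫ K.arrow - b ≫ B.arrow) ≫ π = 0 := by
      rw [Preadditive.sub_comp, Category.assoc, Category.assoc,
        ← Abelian.monoLift_comp I.arrow (K.arrow ≫ π) hK, reassoc_of% hb,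
        imageSubobject_arrow_comp, sub_self]
    have hc : c.arrow ≫ cokernel.π B.arrow = 0 := by
      rw [← ofLE_arrow hcB, Category.assoc, cokernel.condition, comp_zero]
    rw [← cancel_epi p, ← Category.assoc, comp_zero,
      ← sub_add_cancel (p ≫ K.arrow) (b ≫ B.arrow), Preadditive.add_comp, Category.assoc,
      cokernel.condition, comp_zero, add_zero,
      ← Abelian.monoLift_comp c.arrow _ hdiff, Category.assoc, hc, comp_zero]
  · rw [← Category.assoc, comp_cokernel_π_imageSubobject_arrow]

end Subobject

theorem wellPowered_of_faithful {C D : Type*} [Category C] [Category D] [Abelian C]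
    [HasZeroMorphisms D] [LocallySmall.{w} C] [LocallySmall.{w} D] (F : C ⥤ D) [F.Faithful]
    [F.PreservesMonomorphisms] [F.PreservesZeroMorphisms] [WellPowered.{w} D] :
    WellPowered.{w} C where
  subobject_small N := by
    have := Subobject.small_of_map_eq_zero F (Set.univ : Set (Subobject N)) fun _ _ _ f hf =>
      F.map_injective (by rw [hf, F.map_zero])
    exact (small_congr (Equiv.Set.univ _)).1 this

theorem Functor.isZero_obj_imageSubobject_of_map_eq_zero {C D : Type*} [Category C]
    [Category D] [Abelian C] [HasZeroMorphisms D] (F : C ⥤ D) [F.PreservesMonomorphisms]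
    [F.PreservesEpimorphisms] {P Q : C} (f : P ⟶ Q) (hf : F.map f = 0) :
    IsZero (F.obj (imageSubobject f : C)) := by
  refine IsZero.of_mono_eq_zero (F.map (imageSubobject f).arrow)
    (zero_of_epi_comp (F.map (factorThruImageSubobject f)) ?_)
  rw [← F.map_comp, imageSubobject_arrow_comp, hf]

theorem Adjunction.eq_zero_of_map_eq_zero {C D : Type*} [Category C] [Category D]
    [HasZeroMorphisms C] [HasZeroMorphisms D] {L : C ⥤ D} {G : D ⥤ C} (adj : L ⊣ G)
    [L.Full] [L.Faithful] [L.PreservesZeroMorphisms] {P Q : D} (hP : L.essImage P)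
    (f : P ⟶ Q) (hf : G.map f = 0) : f = 0 := by
  have := (adj.isIso_counit_app_iff_mem_essImage).2 hP
  rw [← cancel_epi (adj.counit.app P), ← adj.counit_naturality f, hf, L.map_zero, zero_comp,
    comp_zero]

end CategoryTheory

namespace Recollement

variable (R : Recollement Y A X)

instance : R.iStar.Full := R.iStar_full
instance : R.iStar.Faithful := R.iStar_faithful
instance : R.jRight.Faithful := R.jRight_faithful
instance : R.jLower.Full := R.jLower_full
instance : R.jLower.Faithful := R.jLower_faithful
instance : R.iUp.IsLeftAdjoint := R.adj_i₁.isLeftAdjoint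
instance : R.iStar.IsRightAdjoint := R.adj_i₁.isRightAdjoint
instance : R.iShriek.IsRightAdjoint := R.adj_i₂.isRightAdjoint
instance : R.jUp.IsLeftAdjoint := R.adj_j₂.isLeftAdjoint
instance : R.jUp.IsRightAdjoint := R.adj_j₁.isRightAdjoint
instance : R.jRight.IsRightAdjoint := R.adj_j₂.isRightAdjoint

section

variable [Abelian A]

noncomputable def cTorsion {M : A} (B : Subobject M) : Subobject M :=
  imageSubobject (R.adj_j₁.counit.app (B : A) ≫ B.arrow)

theorem cTorsion_le {M : A} (B : Subobject M) : R.cTorsion B ≤ B := by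
  simpa only [cTorsion, imageSubobject_mono, Subobject.mk_arrow] using
    imageSubobject_comp_le (R.adj_j₁.counit.app (B : A)) B.arrow

variable [Abelian X]

theorem T_image_cokernel_cTorsion {M : A} (B : Subobject M) :
    R.T (imageSubobject (B.arrow ≫ cokernel.π (R.cTorsion B).arrow)) := by
  refine (R.essImage_iff _).2 (R.jUp.isZero_obj_imageSubobject_of_map_eq_zero _ ?_)
  rw [← cancel_epi (R.jUp.map (R.adj_j₁.counit.app (B : A))), comp_zero, ← R.jUp.map_comp,
    ← Category.assoc, cTorsion, Subobject.comp_cokernel_π_imageSubobject_arrow, R.jUp.map_zero]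

end

section

variable [Abelian Y]

theorem isZero_iUp_jLower_obj (W : X) : IsZero (R.iUp.obj (R.jLower.obj W)) := by
  -- The two adjunctions turn an endomorphism of `i^* j_! W` into a map `W ⟶ j^* i_* _ ≅ 0`.
  rw [IsZero.iff_id_eq_zero]
  apply (R.adj_i₁.homEquiv _ _).injective
  apply (R.adj_j₁.homEquiv _ _).injective
  exact ((R.essImage_iff _).1 (R.iStar.obj_mem_essImage _)).eq_of_tgt _ _

variable [Abelian A]

theorem isZero_of_C_of_isZero_jUp {K : A} (hC : R.C K) (hj : IsZero (R.jUp.obj K)) :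
    IsZero K := by
  obtain ⟨W, ⟨e⟩⟩ := (R.essImage_iff K).2 hj
  have hW : IsZero W := hC.of_iso ((asIso (R.adj_i₁.counit.app W)).symm ≪≫ R.iUp.mapIso e)
  exact IsZero.of_iso (R.iStar.map_isZero hW) e.symm

theorem eq_zero_of_T {P Q : A} (hP : R.T P) (f : P ⟶ Q) (hf : R.iShriek.map f = 0) : f = 0 :=
  R.adj_i₂.eq_zero_of_map_eq_zero hP f hf

theorem small_T_subobject [WellPowered.{v} Y] (N : A) :
    Small.{v} {t : Subobject N | R.T (t : A)} :=
  Subobject.small_of_map_eq_zero R.iShriek _ fun _ ht _ f hf => R.eq_zero_of_T ht f hf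

theorem C_cTorsion {M : A} (B : Subobject M) : R.C (R.cTorsion B) := by
  rw [C, cTorsion]
  exact IsZero.of_epi
    (R.iUp.map (factorThruImageSubobject (R.adj_j₁.counit.app (B : A) ≫ B.arrow)))
    (R.isZero_iUp_jLower_obj _)

variable [Abelian X]

theorem eq_zero_of_C {P Q : A} (hP : R.C P) (f : P ⟶ Q) (hf : R.jUp.map f = 0) : f = 0 := by
  have hI : IsZero (imageSubobject f : A) := R.isZero_of_C_of_isZero_jUp
    (IsZero.of_epi (R.iUp.map (factorThruImageSubobject f)) hP)
    (R.jUp.isZero_obj_imageSubobject_of_map_eq_zero f hf)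
  rw [← imageSubobject_arrow_comp f, hI.eq_of_src (imageSubobject f).arrow 0, comp_zero]

theorem small_C_subobject [WellPowered.{v} X] (M : A) :
    Small.{v} {c : Subobject M | R.C (c : A)} :=
  Subobject.small_of_map_eq_zero R.jUp _ fun _ hc _ f hf => R.eq_zero_of_C hc f hf

end

end Recollement

theorem Recollement.wellPowered [Abelian Y] [Abelian A] [Abelian X]
    (R : Recollement Y A X) [WellPowered.{v} X] [WellPowered.{v} Y] : WellPowered.{v} A where
  subobject_small M := by
    let Φ (B : Subobject M) : Σ c : {c : Subobject M | R.C (c : A)},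
        {t : Subobject (cokernel c.1.arrow) | R.T (t : A)} :=
      ⟨⟨R.cTorsion B, R.C_cTorsion B⟩, ⟨_, R.T_image_cokernel_cTorsion B⟩⟩
    have hΦ : Function.LeftInverse
        (fun p => kernelSubobject (cokernel.π p.1.1.arrow ≫ cokernel.π p.2.1.arrow)) Φ :=
      fun B => Subobject.kernelSubobject_cokernel_π_comp_cokernel_π_image (R.cTorsion_le B)
    have := R.small_C_subobject M
    have := fun c : {c : Subobject M | R.C (c : A)} => R.small_T_subobject (cokernel c.1.arrow)
    exact small_of_injective hΦ.injective

/-- In a recollement of abelian categories, if the middle term `A` is well-powered then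
so are the outer terms `X` and `Y`; conversely, if `X` and `Y` are well-powered and the
Ext¹-groups of `A` form sets, then `A` is well-powered. -/
theorem recollement_wellPowered [Abelian Y] [Abelian A] [Abelian X]
    (R : Recollement Y A X) :
    (WellPowered.{v} A → WellPowered.{v} X ∧ WellPowered.{v} Y) ∧
      (WellPowered.{v} X → WellPowered.{v} Y → HasExt.{v} A → WellPowered.{v} A) :=
  ⟨fun _ => ⟨wellPowered_of_faithful R.jRight, wellPowered_of_faithful R.iStar⟩,
    fun _ _ _ => R.wellPowered⟩
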